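/- Let T > 0 and let θ : ℝ → ℝ be three times continuously differentiable with sup|θ''| and sup|θ'''| finite. Define V₂ₖ(t,x) = e^{-k² t} ( 4 k² t θ''(x) cos(kx) + 2 k t θ'''(x) sin(kx) ). Then for every integer k ≥ 1, ∫₀ᵀ ‖V₂ₖ(t,·)‖_{L²(0,π)} dt ≤ √π ( 4 sup|θ''| + 2 sup|θ'''| ) / k². -/

import Mathlib

/-!
Since `k ≤ k²`, pointwise `|V₂ₖ(t,x)| ≤ (4A + 2B) k² t e^{-k²t}`, so the `L²(0,π)` norm is at most
`√π` times this, and `∫₀^∞ t e^{-k²t} dt = 1/k⁴`.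
-/

open Real MeasureTheory intervalIntegral

lemma abs_mul_cos_add_mul_sin_le {p q u v A B y z : ℝ} (hp : 0 ≤ p) (hq : 0 ≤ q)
    (hu : |u| ≤ A) (hv : |v| ≤ B) :
    |p * u * cos y + q * v * sin z| ≤ p * A + q * B := by
  have hucos : |u * cos y| ≤ A := by
    rw [abs_mul]
    exact (mul_le_of_le_one_right (abs_nonneg u) (abs_cos_le_one y)).trans hu
  have hvsin : |v * sin z| ≤ B := by
    rw [abs_mul]
    exact (mul_le_of_le_one_right (abs_nonneg v) (abs_sin_le_one z)).trans hv
  calc |p * u * cos y + q * v * sin z| ≤ |p * (u * cos y)| + |q * (v * sin z)| := by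
        rw [← mul_assoc, ← mul_assoc]; exact abs_add_le _ _
    _ = p * |u * cos y| + q * |v * sin z| := by
        rw [abs_mul p, abs_mul q, abs_of_nonneg hp, abs_of_nonneg hq]
    _ ≤ p * A + q * B := by gcongr

lemma abs_exp_mul_cos_add_sin_le {k t u v A B x : ℝ} (hk : 1 ≤ k) (ht : 0 ≤ t)
    (hu : |u| ≤ A) (hv : |v| ≤ B) :
    |exp (-k ^ 2 * t) * (4 * k ^ 2 * t * u * cos (k * x) + 2 * k * t * v * sin (k * x))|
      ≤ (4 * A + 2 * B) * k ^ 2 * (t * exp (-(k ^ 2 * t))) := by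
  have hB : 0 ≤ B := (abs_nonneg v).trans hv
  have hkk : k ≤ k ^ 2 := by nlinarith
  have hsum := abs_mul_cos_add_mul_sin_le (y := k * x) (z := k * x)
    (by positivity : 0 ≤ 4 * k ^ 2 * t) (by positivity : 0 ≤ 2 * k * t) hu hv
  have hdom : 4 * k ^ 2 * t * A + 2 * k * t * B ≤ (4 * A + 2 * B) * k ^ 2 * t := by
    nlinarith [mul_le_mul_of_nonneg_right hkk (mul_nonneg ht hB)]
  rw [abs_mul, abs_exp, neg_mul]
  calc exp (-(k ^ 2 * t)) * |4 * k ^ 2 * t * u * cos (k * x) + 2 * k * t * v * sin (k * x)|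
      ≤ exp (-(k ^ 2 * t)) * ((4 * A + 2 * B) * k ^ 2 * t) := by gcongr; exact hsum.trans hdom
    _ = (4 * A + 2 * B) * k ^ 2 * (t * exp (-(k ^ 2 * t))) := by ring

lemma sqrt_integral_sq_le_of_abs_le {f : ℝ → ℝ} {a b M : ℝ} (hM : 0 ≤ M)
    (hf : ∀ x ∈ Set.uIoc a b, |f x| ≤ M) :
    √(∫ x in a..b, f x ^ 2) ≤ √|b - a| * M := by
  have hint : ∫ x in a..b, f x ^ 2 ≤ M ^ 2 * |b - a| := by
    refine (Real.le_norm_self _).trans (norm_integral_le_of_norm_le_const fun x hx => ?_)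
    rw [norm_pow, norm_eq_abs]
    exact pow_le_pow_left₀ (abs_nonneg _) (hf x hx) 2
  calc √(∫ x in a..b, f x ^ 2) ≤ √(|b - a| * M ^ 2) := sqrt_le_sqrt (by linarith)
    _ = √|b - a| * M := by rw [sqrt_mul (abs_nonneg _), sqrt_sq hM]

theorem stmt_4_general (T : ℝ) (hT : 0 < T) (θ : ℝ → ℝ)
    (A B : ℝ) (hA : ∀ x : ℝ, |iteratedDeriv 2 θ x| ≤ A)
    (hB : ∀ x : ℝ, |iteratedDeriv 3 θ x| ≤ B)
    (V : ℕ → ℝ → ℝ → ℝ)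
    (hV : ∀ (k : ℕ) (t x : ℝ), V k t x =
      Real.exp (-(k : ℝ) ^ 2 * t) *
        (4 * (k : ℝ) ^ 2 * t * iteratedDeriv 2 θ x * Real.cos (k * x)
          + 2 * (k : ℝ) * t * iteratedDeriv 3 θ x * Real.sin (k * x)))
    (k : ℕ) (hk : 1 ≤ k) :
    ∫ t in (0 : ℝ)..T, Real.sqrt (∫ x in (0 : ℝ)..π, (V k t x) ^ 2)
      ≤ Real.sqrt π * (4 * A + 2 * B) / (k : ℝ) ^ 2 := by
  set C := 4 * A + 2 * B
  have hk1 : (1 : ℝ) ≤ k := by exact_mod_cast hk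
  have hk2 : (0 : ℝ) < (k : ℝ) ^ 2 := by positivity
  have hC : 0 ≤ C := by linarith [(abs_nonneg _).trans (hA 0), (abs_nonneg _).trans (hB 0)]
  have hL2 : ∀ t ∈ Set.Ioc 0 T, √(∫ x in (0 : ℝ)..π, V k t x ^ 2)
      ≤ √π * (C * k ^ 2 * (t * exp (-(k ^ 2 * t)))) := fun t ht => by
    have hbound : ∀ x ∈ Set.uIoc 0 π, |V k t x| ≤ C * k ^ 2 * (t * exp (-(k ^ 2 * t))) :=
      fun x _ => (hV k t x).symm ▸ abs_exp_mul_cos_add_sin_le hk1 ht.1.le (hA x) (hB x)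
    have hM : 0 ≤ C * k ^ 2 * (t * exp (-(k ^ 2 * t))) :=
      mul_nonneg (mul_nonneg hC hk2.le) (mul_nonneg ht.1.le (exp_pos _).le)
    simpa [abs_of_pos pi_pos] using sqrt_integral_sq_le_of_abs_le hM hbound
  calc ∫ t in (0 : ℝ)..T, √(∫ x in (0 : ℝ)..π, V k t x ^ 2)
      ≤ ∫ t in (0 : ℝ)..T, √π * C * k ^ 2 * (t * exp (-(k ^ 2 * t))) := by
        rw [integral_of_le hT.le, integral_of_le hT.le]
        refine setIntegral_mono_of_nonneg (fun t _ => sqrt_nonneg _) (fun t ht => ?_)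
          (Continuous.integrableOn_Ioc (by fun_prop))
        linarith [hL2 t ht]
    _ = √π * C * k ^ 2 * ∫ t in (0 : ℝ)..T, t * exp (-(k ^ 2 * t)) := integral_const_mul _ _
    _ ≤ √π * C * k ^ 2 * (1 / (k ^ 2) ^ 2) := by
        gcongr; simpa using intervalIntegral_pow_mul_exp_neg_le (k := 1) hT.le hk2
    _ = √π * C / k ^ 2 := by field_simp

/-- Third source-term estimate: with
`V₂ₖ(t,x) = e^{-k²t}(4k²t θ''(x) cos(kx) + 2kt θ'''(x) sin(kx))` one has
`∫₀ᵀ ‖V₂ₖ(t,·)‖_{L²(0,π)} dt ≤ √π (4 sup|θ''| + 2 sup|θ'''|)/k²`. -/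
theorem stmt_4 (T : ℝ) (hT : 0 < T) (θ : ℝ → ℝ) (hθ : ContDiff ℝ 3 θ)
    (A B : ℝ) (hA : ∀ x : ℝ, |iteratedDeriv 2 θ x| ≤ A)
    (hB : ∀ x : ℝ, |iteratedDeriv 3 θ x| ≤ B)
    (V : ℕ → ℝ → ℝ → ℝ)
    (hV : ∀ (k : ℕ) (t x : ℝ), V k t x =
      Real.exp (-(k : ℝ) ^ 2 * t) *
        (4 * (k : ℝ) ^ 2 * t * iteratedDeriv 2 θ x * Real.cos (k * x)
          + 2 * (k : ℝ) * t * iteratedDeriv 3 θ x * Real.sin (k * x)))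
    (k : ℕ) (hk : 1 ≤ k) :
    ∫ t in (0 : ℝ)..T, Real.sqrt (∫ x in (0 : ℝ)..π, (V k t x) ^ 2)
      ≤ Real.sqrt π * (4 * A + 2 * B) / (k : ℝ) ^ 2 :=
  stmt_4_general T hT θ A B hA hB V hV k hk
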